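/- In the Bauer–Catanese case G = (ℤ/5ℤ)²: with F = Π₁ × Π₂ and K the kernel of (p,q) ↦ φ(p) − ψ(q), the quotient group ⁅F, F⁆ / ⁅K, K⁆ is isomorphic to ℤ/5ℤ. -/

import Mathlib

/-!
Let `Q = F/⁅K,K⁆` and let `c` be the image of `(⁅a₁, a₂⁆, 1) ∈ K`. As `ψ` is onto, `F = K · (1 × Π₂)`;
elements of `K` commute in `Q` and `Π₁ × 1` commutes with `1 × Π₂`, so `c` is central. As `φ` is
onto, `(1, ⁅b, b'⁆)` equals `(⁅s, s'⁆⁻¹, 1)` in `Q` for lifts `(s, b), (s', b') ∈ K`, so the image of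
`⁅F,F⁆` is the commutator subgroup of the group generated by the images of `a₁, a₂`. Their
commutator `c` being central, this is `⟨c⟩`, and `c⁵ = ⁅a₁⁵, a₂⁆ = 1`. Finally `c ≠ 1`: `F` maps
to a central product of two Heisenberg groups over `ℤ/5ℤ`, sending `K` into the abelian subgroup
where the two halves agree but `c` to a nontrivial central element.
-/

/-- Relators of `Π₁ = ⟨a₁, a₂, a₃ ∣ a₁⁵, a₂⁵, a₃⁵, a₁a₂a₃⟩`. -/
def bcRels₁ : Set (FreeGroup (Fin 3)) :=
  {FreeGroup.of 0 ^ 5, FreeGroup.of 1 ^ 5, FreeGroup.of 2 ^ 5,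
   FreeGroup.of 0 * FreeGroup.of 1 * FreeGroup.of 2}

/-- Relators of `Π₂ = ⟨b₁, b₂, b₃ ∣ b₁⁵, b₂⁵, b₃⁵, b₁b₂b₃⟩`. -/
def bcRels₂ : Set (FreeGroup (Fin 3)) :=
  {FreeGroup.of 0 ^ 5, FreeGroup.of 1 ^ 5, FreeGroup.of 2 ^ 5,
   FreeGroup.of 0 * FreeGroup.of 1 * FreeGroup.of 2}

/-- The group `G = (ℤ/5ℤ)²`, written multiplicatively. -/
abbrev bcG : Type := Multiplicative (ZMod 5 × ZMod 5)

open Subgroup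
open scoped commutatorElement

section CentralCommutator

variable {G : Type*} [Group G]

theorem Subgroup.normal_of_le_center {H : Subgroup G} (h : H ≤ center G) : H.Normal :=
  normalizer_eq_top_iff.mp <| top_le_iff.mp <|
    (centralizer_eq_top_iff_subset.mpr h).ge.trans (centralizer_le_normalizer _)

theorem commutatorElement_pow_left_of_mem_center {x y : G} (hc : ⁅x, y⁆ ∈ center G) (n : ℕ) :
    ⁅x ^ n, y⁆ = ⁅x, y⁆ ^ n := by
  induction n with
  | zero => simp
  | succ n ih =>
    have hsplit : ⁅x * x ^ n, y⁆ = x * ⁅x ^ n, y⁆ * x⁻¹ * ⁅x, y⁆ := by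
      simp only [commutatorElement_def]; group
    rw [pow_succ', hsplit, ih, mem_center_iff.mp (pow_mem hc n) x, mul_inv_cancel_right, pow_succ]

theorem commutator_closure_pair_le_zpowers {x y : G} (hc : ⁅x, y⁆ ∈ center G) :
    ⁅closure {x, y}, closure {x, y}⁆ ≤ zpowers ⁅x, y⁆ := by
  have : (zpowers ⁅x, y⁆).Normal := normal_of_le_center (zpowers_le.mpr hc)
  set π := QuotientGroup.mk' (zpowers ⁅x, y⁆)
  have hxy : π x * π y = π y * π x := by
    rw [← commutatorElement_eq_one_iff_mul_comm, ← map_commutatorElement,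
      QuotientGroup.mk'_apply, QuotientGroup.eq_one_iff]
    exact mem_zpowers _
  have hcomm : IsMulCommutative (closure (π '' {x, y})) := by
    refine isMulCommutative_closure ?_
    simp only [Set.image_pair, Set.mem_insert_iff, Set.mem_singleton_iff]
    rintro a (rfl | rfl) b (rfl | rfl) <;> first | rfl | exact hxy | exact hxy.symm
  rw [← QuotientGroup.ker_mk' (zpowers ⁅x, y⁆), ← Subgroup.map_eq_bot_iff, map_commutator,
    MonoidHom.map_closure, commutator_eq_bot_iff_le_centralizer]
  exact le_centralizer_iff_isMulCommutative.mpr hcomm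

end CentralCommutator

theorem Subgroup.commutator_le_ker_of_commute {Γ W : Type*} [Group Γ] [Group W] {H : Subgroup Γ}
    {f : Γ →* W} (h : ∀ x ∈ H, ∀ y ∈ H, Commute (f x) (f y)) : ⁅H, H⁆ ≤ f.ker :=
  commutator_le.mpr fun x hx y hy => by
    rw [MonoidHom.mem_ker, map_commutatorElement, commutatorElement_eq_one_iff_commute]
    exact h x hx y hy

theorem QuotientGroup.commute_mk_commutator_of_mem {Γ : Type*} [Group Γ] {H : Subgroup Γ}
    [H.Normal] {x y : Γ} (hx : x ∈ H) (hy : y ∈ H) :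
    Commute (QuotientGroup.mk' ⁅H, H⁆ x) (QuotientGroup.mk' ⁅H, H⁆ y) := by
  rw [← commutatorElement_eq_one_iff_commute, ← map_commutatorElement, mk'_apply, eq_one_iff]
  exact commutator_mem_commutator hx hy

section FiberProd

variable {A B G : Type*} [Group A] [Group B] [CommGroup G] (φ : A →* G) (ψ : B →* G)

def fiberProd : Subgroup (A × B) :=
  (φ.comp (MonoidHom.fst A B) / ψ.comp (MonoidHom.snd A B)).ker

instance : (fiberProd φ ψ).Normal := MonoidHom.normal_ker _

variable {φ ψ}

theorem mem_fiberProd {x : A × B} : x ∈ fiberProd φ ψ ↔ φ x.1 = ψ x.2 := by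
  rw [fiberProd, MonoidHom.mem_ker, MonoidHom.div_apply, div_eq_one]
  rfl

theorem mk_inl_mem_center (hψ : Function.Surjective ψ) {a : A} (ha : φ a = 1) :
    (QuotientGroup.mk' ⁅fiberProd φ ψ, fiberProd φ ψ⁆).comp (MonoidHom.inl A B) a ∈ center _ := by
  set π := QuotientGroup.mk' ⁅fiberProd φ ψ, fiberProd φ ψ⁆
  refine mem_center_iff.mpr fun z => ?_
  obtain ⟨⟨p, q⟩, rfl⟩ := QuotientGroup.mk'_surjective _ z
  obtain ⟨s, hs⟩ := hψ (φ p)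
  have hsplit : ((p, q) : A × B) = (p, s) * (1, s⁻¹ * q) := by simp
  have hk : Commute (π (p, s)) (π (a, 1)) :=
    QuotientGroup.commute_mk_commutator_of_mem (mem_fiberProd.mpr hs.symm)
      (mem_fiberProd.mpr (by simpa using ha))
  have hb : Commute (π (1, s⁻¹ * q)) (π (a, 1)) :=
    ((MonoidHom.commute_inl_inr a (s⁻¹ * q)).symm).map π
  rw [hsplit, map_mul]
  exact (hk.mul_left hb).eq

theorem mk_inl_commutator_mem_center (hψ : Function.Surjective ψ) (a a' : A) :
    (QuotientGroup.mk' ⁅fiberProd φ ψ, fiberProd φ ψ⁆).comp (MonoidHom.inl A B) ⁅a, a'⁆ ∈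
      center _ :=
  mk_inl_mem_center hψ (by rw [map_commutatorElement, (Commute.all _ _).commutator_eq])

theorem mk_inl_commutator_pow (hψ : Function.Surjective ψ) (a a' : A) (n : ℕ) :
    (QuotientGroup.mk' ⁅fiberProd φ ψ, fiberProd φ ψ⁆).comp (MonoidHom.inl A B) ⁅a, a'⁆ ^ n =
      (QuotientGroup.mk' _).comp (MonoidHom.inl A B) ⁅a ^ n, a'⁆ := by
  have hc := mk_inl_commutator_mem_center (φ := φ) hψ a a'
  rw [map_commutatorElement] at hc ⊢
  rw [map_commutatorElement, map_pow, commutatorElement_pow_left_of_mem_center hc]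

theorem map_mk_commutator_le_map_inl (hφ : Function.Surjective φ) :
    map (QuotientGroup.mk' ⁅fiberProd φ ψ, fiberProd φ ψ⁆) ⁅(⊤ : Subgroup (A × B)), ⊤⁆ ≤
      map ((QuotientGroup.mk' _).comp (MonoidHom.inl A B)) ⁅(⊤ : Subgroup A), ⊤⁆ := by
  rw [map_le_iff_le_comap, commutator_le]
  rintro ⟨a, b⟩ - ⟨a', b'⟩ -
  obtain ⟨s, hs⟩ := hφ (ψ b)
  obtain ⟨s', hs'⟩ := hφ (ψ b')
  have hK := (QuotientGroup.commute_mk_commutator_of_mem (x := (s, b)) (y := (s', b'))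
    (mem_fiberProd.mpr hs) (mem_fiberProd.mpr hs')).commutator_eq
  rw [← map_commutatorElement] at hK
  refine ⟨⁅a, a'⁆ * ⁅s, s'⁆⁻¹, mul_mem (commutator_mem_commutator trivial trivial)
    (inv_mem (commutator_mem_commutator trivial trivial)), ?_⟩
  have hsplit : ⁅(a, b), (a', b')⁆ = ((⁅a, a'⁆ * ⁅s, s'⁆⁻¹, 1) : A × B) * ⁅(s, b), (s', b')⁆ := by
    ext
    · simp [commutatorElement_def]; group
    · simp [commutatorElement_def]
  rw [hsplit, map_mul (QuotientGroup.mk' _), hK, mul_one]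
  rfl

theorem map_mk_commutator_eq_zpowers (hφ : Function.Surjective φ) (hψ : Function.Surjective ψ)
    {x₀ x₁ : A} (hA : closure {x₀, x₁} = ⊤) :
    map (QuotientGroup.mk' ⁅fiberProd φ ψ, fiberProd φ ψ⁆) ⁅(⊤ : Subgroup (A × B)), ⊤⁆ =
      zpowers ((QuotientGroup.mk' _).comp (MonoidHom.inl A B) ⁅x₀, x₁⁆) := by
  set ι := (QuotientGroup.mk' ⁅fiberProd φ ψ, fiberProd φ ψ⁆).comp (MonoidHom.inl A B)
  have hcentral := mk_inl_commutator_mem_center (φ := φ) hψ x₀ x₁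
  rw [map_commutatorElement] at hcentral ⊢
  refine le_antisymm ?_ (zpowers_le.mpr ?_)
  · calc _ ≤ map ι ⁅(⊤ : Subgroup A), ⊤⁆ := map_mk_commutator_le_map_inl hφ
      _ = ⁅closure {ι x₀, ι x₁}, closure {ι x₀, ι x₁}⁆ := by
        rw [map_commutator, ← hA, MonoidHom.map_closure, Set.image_pair]
      _ ≤ _ := commutator_closure_pair_le_zpowers hcentral
  · exact ⟨⁅(x₀, 1), (x₁, 1)⁆, commutator_mem_commutator trivial trivial,
      map_commutatorElement _ _ _⟩

end FiberProd

namespace PresentedGroup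

variable {rels : Set (FreeGroup (Fin 3))}

theorem of_two_eq_inv (h : FreeGroup.of 0 * FreeGroup.of 1 * FreeGroup.of 2 ∈ rels) :
    (of 2 : PresentedGroup rels) = (of 0 * of 1)⁻¹ :=
  eq_inv_of_mul_eq_one_right (one_of_mem h)

theorem closure_of_zero_of_one (h : FreeGroup.of 0 * FreeGroup.of 1 * FreeGroup.of 2 ∈ rels) :
    closure {of 0, of 1} = (⊤ : Subgroup (PresentedGroup rels)) := by
  have h0 : of 0 ∈ closure {(of 0 : PresentedGroup rels), of 1} := subset_closure (by simp)
  have h1 : of 1 ∈ closure {(of 0 : PresentedGroup rels), of 1} := subset_closure (by simp)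
  rw [eq_top_iff, ← closure_range_of, closure_le]
  rintro _ ⟨i, rfl⟩
  fin_cases i
  · exact h0
  · exact h1
  · simp only [Fin.reduceFinMk, of_two_eq_inv h]
    exact inv_mem (mul_mem h0 h1)

theorem hom_ext_of_zero_of_one (h : FreeGroup.of 0 * FreeGroup.of 1 * FreeGroup.of 2 ∈ rels)
    {M : Type*} [Monoid M] {f g : PresentedGroup rels →* M} (h0 : f (of 0) = g (of 0))
    (h1 : f (of 1) = g (of 1)) : f = g :=
  MonoidHom.eq_of_eqOn_dense (closure_of_zero_of_one h) <| by
    rintro _ (rfl | rfl)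
    exacts [h0, h1]

end PresentedGroup

theorem MonoidHom.surjective_of_pow_mul_pow {A G : Type*} [Group A] [Group G] (f : A →* G)
    {a b : A} {N : ℕ} (h : ∀ g, ∃ m n : Fin N, f a ^ (m : ℕ) * f b ^ (n : ℕ) = g) :
    Function.Surjective f :=
  fun g => (h g).elim fun m ⟨n, hmn⟩ =>
    ⟨a ^ (m : ℕ) * b ^ (n : ℕ), by rwa [map_mul, map_pow, map_pow]⟩

theorem of_mul_of_mul_of_mem_bcRels₁ :
    FreeGroup.of 0 * FreeGroup.of 1 * FreeGroup.of 2 ∈ bcRels₁ := by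
  simp [bcRels₁]

theorem of_mul_of_mul_of_mem_bcRels₂ :
    FreeGroup.of 0 * FreeGroup.of 1 * FreeGroup.of 2 ∈ bcRels₂ := by
  simp [bcRels₂]

theorem of_zero_pow_five : (PresentedGroup.of 0 : PresentedGroup bcRels₁) ^ 5 = 1 := by
  have h := PresentedGroup.one_of_mem (rels := bcRels₁) (x := FreeGroup.of 0 ^ 5)
    (by simp [bcRels₁])
  rwa [map_pow] at h

theorem lift_eq_one_of_mem_bcRels₁ {H : Type*} [Group H] {g : Fin 3 → H}
    (hpow : ∀ i, g i ^ 5 = 1) (hmul : g 0 * g 1 * g 2 = 1) :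
    ∀ r ∈ bcRels₁, FreeGroup.lift g r = 1 := by
  rintro r (rfl | rfl | rfl | rfl) <;> simp [hpow, hmul]

/-- The Heisenberg groups `{(u, s)}` and `{(v, s')}` over `R`, with law
`(u, s) (u', s') = (u + u', s + s' + u.1 * u'.2)`, glued along their centres by `t = s - s'`. -/
@[ext]
structure HeisenbergCentralProd (R : Type*) where
  u : R × R
  v : R × R
  t : R
deriving DecidableEq

namespace HeisenbergCentralProd

variable {R : Type*} [CommRing R]

instance : Mul (HeisenbergCentralProd R) :=
  ⟨fun a b => ⟨a.u + b.u, a.v + b.v, a.t + b.t + a.u.1 * b.u.2 - a.v.1 * b.v.2⟩⟩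

instance : One (HeisenbergCentralProd R) := ⟨⟨0, 0, 0⟩⟩

instance : Inv (HeisenbergCentralProd R) :=
  ⟨fun a => ⟨-a.u, -a.v, -a.t + a.u.1 * a.u.2 - a.v.1 * a.v.2⟩⟩

@[simp] theorem mul_u (a b : HeisenbergCentralProd R) : (a * b).u = a.u + b.u := rfl
@[simp] theorem mul_v (a b : HeisenbergCentralProd R) : (a * b).v = a.v + b.v := rfl
@[simp] theorem mul_t (a b : HeisenbergCentralProd R) :
    (a * b).t = a.t + b.t + a.u.1 * b.u.2 - a.v.1 * b.v.2 := rfl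
@[simp] theorem one_u : (1 : HeisenbergCentralProd R).u = 0 := rfl
@[simp] theorem one_v : (1 : HeisenbergCentralProd R).v = 0 := rfl
@[simp] theorem one_t : (1 : HeisenbergCentralProd R).t = 0 := rfl
@[simp] theorem inv_u (a : HeisenbergCentralProd R) : a⁻¹.u = -a.u := rfl
@[simp] theorem inv_v (a : HeisenbergCentralProd R) : a⁻¹.v = -a.v := rfl
@[simp] theorem inv_t (a : HeisenbergCentralProd R) :
    a⁻¹.t = -a.t + a.u.1 * a.u.2 - a.v.1 * a.v.2 := rfl

instance : Group (HeisenbergCentralProd R) where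
  mul_assoc a b c := by ext <;> simp <;> ring
  one_mul a := by ext <;> simp
  mul_one a := by ext <;> simp
  inv_mul_cancel a := by ext <;> simp; ring

def projU : HeisenbergCentralProd R →* Multiplicative (R × R) where
  toFun a := .ofAdd a.u
  map_one' := rfl
  map_mul' _ _ := rfl

def projV : HeisenbergCentralProd R →* Multiplicative (R × R) where
  toFun a := .ofAdd a.v
  map_one' := rfl
  map_mul' _ _ := rfl

theorem commute_of_projU_eq_projV {a b : HeisenbergCentralProd R} (ha : projU a = projV a)
    (hb : projU b = projV b) : Commute a b := by
  change a.u = a.v at ha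
  change b.u = b.v at hb
  ext <;> simp [ha, hb, add_comm]

theorem commute_of_projV_eq_one_of_projU_eq_one {a b : HeisenbergCentralProd R}
    (ha : projV a = 1) (hb : projU b = 1) : Commute a b := by
  change a.v = 0 at ha
  change b.u = 0 at hb
  ext <;> simp [ha, hb, add_comm]

end HeisenbergCentralProd

section Witness

open HeisenbergCentralProd PresentedGroup

def heisGen₁ : Fin 3 → HeisenbergCentralProd (ZMod 5) :=
  ![⟨(1, 0), 0, 0⟩, ⟨(0, 1), 0, 0⟩, (⟨(1, 0), 0, 0⟩ * ⟨(0, 1), 0, 0⟩)⁻¹]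

def heisGen₂ : Fin 3 → HeisenbergCentralProd (ZMod 5) :=
  ![⟨0, (1, 2), 0⟩, ⟨0, (3, 4), 0⟩, (⟨0, (1, 2), 0⟩ * ⟨0, (3, 4), 0⟩)⁻¹]

def heisHom₁ : PresentedGroup bcRels₁ →* HeisenbergCentralProd (ZMod 5) :=
  toGroup (lift_eq_one_of_mem_bcRels₁ (g := heisGen₁) (by decide) (mul_inv_cancel _))

-- `bcRels₂` is the same set as `bcRels₁`.
def heisHom₂ : PresentedGroup bcRels₂ →* HeisenbergCentralProd (ZMod 5) :=
  toGroup (lift_eq_one_of_mem_bcRels₁ (g := heisGen₂) (by decide) (mul_inv_cancel _))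

variable {φ : PresentedGroup bcRels₁ →* bcG} {ψ : PresentedGroup bcRels₂ →* bcG}

theorem projU_heisHom₁ (hφ0 : φ (of 0) = Multiplicative.ofAdd (1, 0))
    (hφ1 : φ (of 1) = Multiplicative.ofAdd (0, 1)) (p : PresentedGroup bcRels₁) :
    projU (heisHom₁ p) = φ p :=
  DFunLike.congr_fun (hom_ext_of_zero_of_one (f := projU.comp heisHom₁)
    of_mul_of_mul_of_mem_bcRels₁ hφ0.symm hφ1.symm) p

theorem projV_heisHom₁ (p : PresentedGroup bcRels₁) : projV (heisHom₁ p) = 1 :=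
  DFunLike.congr_fun (hom_ext_of_zero_of_one (f := projV.comp heisHom₁) (g := 1)
    of_mul_of_mul_of_mem_bcRels₁ rfl rfl) p

theorem projU_heisHom₂ (q : PresentedGroup bcRels₂) : projU (heisHom₂ q) = 1 :=
  DFunLike.congr_fun (hom_ext_of_zero_of_one (f := projU.comp heisHom₂) (g := 1)
    of_mul_of_mul_of_mem_bcRels₂ rfl rfl) q

theorem projV_heisHom₂ (hψ0 : ψ (of 0) = Multiplicative.ofAdd (1, 2))
    (hψ1 : ψ (of 1) = Multiplicative.ofAdd (3, 4)) (q : PresentedGroup bcRels₂) :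
    projV (heisHom₂ q) = ψ q :=
  DFunLike.congr_fun (hom_ext_of_zero_of_one (f := projV.comp heisHom₂)
    of_mul_of_mul_of_mem_bcRels₂ hψ0.symm hψ1.symm) q

def heisHom :
    PresentedGroup bcRels₁ × PresentedGroup bcRels₂ →* HeisenbergCentralProd (ZMod 5) :=
  heisHom₁.noncommCoprod heisHom₂ fun p q =>
    commute_of_projV_eq_one_of_projU_eq_one (projV_heisHom₁ p) (projU_heisHom₂ q)

theorem commutator_fiberProd_le_ker_heisHom (hφ0 : φ (of 0) = Multiplicative.ofAdd (1, 0))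
    (hφ1 : φ (of 1) = Multiplicative.ofAdd (0, 1)) (hψ0 : ψ (of 0) = Multiplicative.ofAdd (1, 2))
    (hψ1 : ψ (of 1) = Multiplicative.ofAdd (3, 4)) :
    ⁅fiberProd φ ψ, fiberProd φ ψ⁆ ≤ heisHom.ker := by
  have hdiag : ∀ x ∈ fiberProd φ ψ, projU (heisHom x) = projV (heisHom x) := by
    intro x hx
    rw [heisHom, MonoidHom.noncommCoprod_apply, map_mul, map_mul, projU_heisHom₁ hφ0 hφ1,
      projU_heisHom₂, projV_heisHom₁, projV_heisHom₂ hψ0 hψ1, mul_one, one_mul]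
    exact mem_fiberProd.mp hx
  exact commutator_le_ker_of_commute fun x hx y hy =>
    commute_of_projU_eq_projV (hdiag x hx) (hdiag y hy)

theorem mk_inl_commutator_of_zero_of_one_ne_one (hφ0 : φ (of 0) = Multiplicative.ofAdd (1, 0))
    (hφ1 : φ (of 1) = Multiplicative.ofAdd (0, 1)) (hψ0 : ψ (of 0) = Multiplicative.ofAdd (1, 2))
    (hψ1 : ψ (of 1) = Multiplicative.ofAdd (3, 4)) :
    (QuotientGroup.mk' ⁅fiberProd φ ψ, fiberProd φ ψ⁆).comp (MonoidHom.inl _ _)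
      ⁅(of 0 : PresentedGroup bcRels₁), of 1⁆ ≠ 1 := by
  rw [MonoidHom.comp_apply, QuotientGroup.mk'_apply, Ne, QuotientGroup.eq_one_iff]
  intro h
  have h1 := commutator_fiberProd_le_ker_heisHom hφ0 hφ1 hψ0 hψ1 h
  rw [MonoidHom.mem_ker, heisHom, MonoidHom.inl_apply, MonoidHom.noncommCoprod_apply, map_one,
    mul_one, map_commutatorElement, heisHom₁, toGroup.of, toGroup.of] at h1
  exact absurd h1 (by decide)

end Witness

/-- `⁅F,F⁆/⁅K,K⁆` is realized as the image of `⁅F,F⁆` in `F/⁅K,K⁆`. -/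
theorem bauer_catanese_Z5_commutator_quotient_general
    (φ : PresentedGroup bcRels₁ →* bcG) (ψ : PresentedGroup bcRels₂ →* bcG)
    (hφ0 : φ (PresentedGroup.of 0) = Multiplicative.ofAdd (1, 0))
    (hφ1 : φ (PresentedGroup.of 1) = Multiplicative.ofAdd (0, 1))
    (hψ0 : ψ (PresentedGroup.of 0) = Multiplicative.ofAdd (1, 2))
    (hψ1 : ψ (PresentedGroup.of 1) = Multiplicative.ofAdd (3, 4)) :
    Nonempty
      ((Subgroup.map
          (QuotientGroup.mk'
            ⁅MonoidHom.ker
                (φ.comp (MonoidHom.fst (PresentedGroup bcRels₁) (PresentedGroup bcRels₂)) /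
                  ψ.comp (MonoidHom.snd (PresentedGroup bcRels₁) (PresentedGroup bcRels₂))),
              MonoidHom.ker
                (φ.comp (MonoidHom.fst (PresentedGroup bcRels₁) (PresentedGroup bcRels₂)) /
                  ψ.comp (MonoidHom.snd (PresentedGroup bcRels₁) (PresentedGroup bcRels₂)))⁆)
          ⁅(⊤ : Subgroup (PresentedGroup bcRels₁ × PresentedGroup bcRels₂)),
            (⊤ : Subgroup (PresentedGroup bcRels₁ × PresentedGroup bcRels₂))⁆) ≃*
        Multiplicative (ZMod 5)) := by
  have hφ : Function.Surjective φ :=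
    φ.surjective_of_pow_mul_pow (a := .of 0) (b := .of 1) (N := 5) (by rw [hφ0, hφ1]; decide)
  have hψ : Function.Surjective ψ :=
    ψ.surjective_of_pow_mul_pow (a := .of 0) (b := .of 1) (N := 5) (by rw [hψ0, hψ1]; decide)
  have hT := map_mk_commutator_eq_zpowers hφ hψ
    (PresentedGroup.closure_of_zero_of_one of_mul_of_mul_of_mem_bcRels₁)
  set c := (QuotientGroup.mk' ⁅fiberProd φ ψ, fiberProd φ ψ⁆).comp (MonoidHom.inl _ _)
    ⁅(PresentedGroup.of 0 : PresentedGroup bcRels₁), PresentedGroup.of 1⁆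
  have hc5 : c ^ 5 = 1 := by
    rw [mk_inl_commutator_pow hψ, of_zero_pow_five, commutatorElement_one_left, map_one]
  have : Fact (Nat.Prime 5) := ⟨Nat.prime_five⟩
  have hc : orderOf c = 5 :=
    orderOf_eq_prime hc5 (mk_inl_commutator_of_zero_of_one_ne_one hφ0 hφ1 hψ0 hψ1)
  have hcard : Nat.card (map (QuotientGroup.mk' ⁅fiberProd φ ψ, fiberProd φ ψ⁆)
      ⁅(⊤ : Subgroup (PresentedGroup bcRels₁ × PresentedGroup bcRels₂)), ⊤⁆) = 5 := by
    rw [hT, Nat.card_zpowers, hc]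
  exact ⟨mulEquivOfPrimeCardEq hcard (by simp)⟩

/-- Bauer–Catanese case `G = (ℤ/5ℤ)²`. With `F = Π₁ × Π₂` and `K` the
kernel of `(p,q) ↦ φ(p) - ψ(q)`, the quotient `⁅F,F⁆/⁅K,K⁆` (realized as the image
of `⁅F,F⁆` in `F/⁅K,K⁆`) is isomorphic to `ℤ/5ℤ`. -/
theorem bauer_catanese_Z5_commutator_quotient
    (φ : PresentedGroup bcRels₁ →* bcG) (ψ : PresentedGroup bcRels₂ →* bcG)
    (hφ0 : φ (PresentedGroup.of 0) = Multiplicative.ofAdd (1, 0))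
    (hφ1 : φ (PresentedGroup.of 1) = Multiplicative.ofAdd (0, 1))
    (hφ2 : φ (PresentedGroup.of 2) = Multiplicative.ofAdd (-1, -1))
    (hψ0 : ψ (PresentedGroup.of 0) = Multiplicative.ofAdd (1, 2))
    (hψ1 : ψ (PresentedGroup.of 1) = Multiplicative.ofAdd (3, 4))
    (hψ2 : ψ (PresentedGroup.of 2) = Multiplicative.ofAdd (1, 4)) :
    Nonempty
      ((Subgroup.map
          (QuotientGroup.mk'
            ⁅MonoidHom.ker
                (φ.comp (MonoidHom.fst (PresentedGroup bcRels₁) (PresentedGroup bcRels₂)) /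
                  ψ.comp (MonoidHom.snd (PresentedGroup bcRels₁) (PresentedGroup bcRels₂))),
              MonoidHom.ker
                (φ.comp (MonoidHom.fst (PresentedGroup bcRels₁) (PresentedGroup bcRels₂)) /
                  ψ.comp (MonoidHom.snd (PresentedGroup bcRels₁) (PresentedGroup bcRels₂)))⁆)
          ⁅(⊤ : Subgroup (PresentedGroup bcRels₁ × PresentedGroup bcRels₂)),
            (⊤ : Subgroup (PresentedGroup bcRels₁ × PresentedGroup bcRels₂))⁆) ≃*
        Multiplicative (ZMod 5)) :=
  bauer_catanese_Z5_commutator_quotient_general φ ψ hφ0 hφ1 hψ0 hψ1
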